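/- arXiv:2506.20985 — 4 statements merged into one kernel-verified Lean document; each statement's English description precedes it below -/
import Mathlib

section
/- Let k ≥ 1, let T be a finite subset of ℤ^k, let a : ℤ^k → ℂ, and define g : ℝ^k → ℂ by g(θ) = ∑_{t ∈ T} a(t) · ∏_{j=1}^k exp(−i · t_j · θ_j / 2). Suppose λ_1, …, λ_k are natural numbers such that |t_j| ≤ λ_j for every t ∈ T and every j ∈ {1,…,k}. Let S_1, …, S_k be finite subsets of the interval [0, 4π) with |S_j| > 2·λ_j for each j. If g(v) = 0 for every v ∈ S_1 × S_2 × ⋯ × S_k, then g(θ) = 0 for every θ ∈ ℝ^k. -/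
/-! Substituting `z_j = exp (-i θ_j / 2)` turns `g` into a Laurent polynomial in `z` whose
exponent in `z_j` lies in `[-λ_j, λ_j]`; multiplying by `∏ z_j ^ λ_j` gives an honest polynomial
of degree at most `2 λ_j` in `z_j`. Since `θ ↦ exp (-i θ / 2)` is injective on `[0, 4π)`, the grid
`S₁ × ⋯ × S_k` maps to a grid with more than `2 λ_j` points in direction `j` on which that
polynomial vanishes, so it is zero by the combinatorial Nullstellensatz grid lemma. -/

open Complex Real MvPolynomial Finset

section LaurentGrid

variable {σ K : Type*} [Fintype σ] [Field K]

def laurentEval (T : Finset (σ → ℤ)) (a : (σ → ℤ) → K) (z : σ → K) : K :=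
  ∑ t ∈ T, a t * ∏ j, z j ^ t j

/-- `toNat` only truncates when `t j < -lam j`, which the lemmas below exclude. -/
noncomputable def shiftExponent (lam : σ → ℕ) (t : σ → ℤ) : σ →₀ ℕ :=
  Finsupp.equivFunOnFinite.symm fun j => (t j + lam j).toNat

noncomputable def laurentNumerator (T : Finset (σ → ℤ)) (a : (σ → ℤ) → K) (lam : σ → ℕ) :
    MvPolynomial σ K :=
  ∑ t ∈ T, monomial (shiftExponent lam t) (a t)

lemma pow_shiftExponent {lam : σ → ℕ} {t : σ → ℤ} {j : σ} (ht : -(lam j : ℤ) ≤ t j)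
    {x : K} (hx : x ≠ 0) : x ^ shiftExponent lam t j = x ^ lam j * x ^ t j := by
  rw [← zpow_natCast, shiftExponent, Finsupp.coe_equivFunOnFinite_symm,
    Int.toNat_of_nonneg (by omega), zpow_add₀ hx, zpow_natCast, mul_comm]

lemma eval_laurentNumerator {T : Finset (σ → ℤ)} {lam : σ → ℕ}
    (hT : ∀ t ∈ T, ∀ j, -(lam j : ℤ) ≤ t j) (a : (σ → ℤ) → K) {z : σ → K}
    (hz : ∀ j, z j ≠ 0) :
    eval z (laurentNumerator T a lam) = (∏ j, z j ^ lam j) * laurentEval T a z := by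
  rw [laurentNumerator, laurentEval, map_sum, mul_sum]
  refine sum_congr rfl fun t ht => ?_
  rw [eval_monomial, Finsupp.prod_fintype _ _ fun j => pow_zero _]
  simp only [pow_shiftExponent (hT t ht _) (hz _), prod_mul_distrib]
  ring

lemma degreeOf_laurentNumerator_le {T : Finset (σ → ℤ)} {lam : σ → ℕ}
    (hT : ∀ t ∈ T, ∀ j, t j ≤ lam j) (a : (σ → ℤ) → K) (j : σ) :
    degreeOf j (laurentNumerator T a lam) ≤ 2 * lam j := by
  refine (degreeOf_sum_le _ _ _).trans (Finset.sup_le fun t ht => ?_)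
  refine degreeOf_le_iff.2 fun m hm => ?_
  rw [Finset.mem_singleton.1 (support_monomial_subset hm), shiftExponent,
    Finsupp.coe_equivFunOnFinite_symm]
  have := hT t ht j
  omega

theorem laurentEval_eq_zero_of_eq_zero_on_grid {T : Finset (σ → ℤ)} {lam : σ → ℕ}
    (hT : ∀ t ∈ T, ∀ j, |t j| ≤ lam j) (a : (σ → ℤ) → K) (W : σ → Finset K)
    (hW : ∀ j, 0 ∉ W j) (hcard : ∀ j, 2 * lam j < #(W j))
    (hzero : ∀ z, (∀ j, z j ∈ W j) → laurentEval T a z = 0)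
    {z : σ → K} (hz : ∀ j, z j ≠ 0) : laurentEval T a z = 0 := by
  have hlow : ∀ t ∈ T, ∀ j, -(lam j : ℤ) ≤ t j := fun t ht j => (abs_le.1 (hT t ht j)).1
  have hup : ∀ t ∈ T, ∀ j, t j ≤ lam j := fun t ht j => (abs_le.1 (hT t ht j)).2
  have hnum : laurentNumerator T a lam = 0 := by
    refine eq_zero_of_eval_zero_at_prod_finset _ W
      (fun j => (degreeOf_laurentNumerator_le hup a j).trans_lt (hcard j)) fun w hw => ?_
    rw [eval_laurentNumerator hlow a fun j h => hW j (h ▸ hw j), hzero w hw, mul_zero]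
  have := eval_laurentNumerator hlow a hz
  rw [hnum, map_zero, eq_comm] at this
  exact (mul_eq_zero.1 this).resolve_left (prod_ne_zero_iff.2 fun j _ => pow_ne_zero _ (hz j))

end LaurentGrid

noncomputable def halfAngle (θ : ℝ) : ℂ := exp (-I * θ / 2)

lemma halfAngle_ne_zero (θ : ℝ) : halfAngle θ ≠ 0 := Complex.exp_ne_zero _

lemma halfAngle_injOn (c : ℝ) : Set.InjOn halfAngle (Set.Ico c (c + 4 * π)) := by
  intro s hs s' hs' h
  have key : Circle.exp (-s / 2) = Circle.exp (-s' / 2) := by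
    ext
    rw [halfAngle, halfAngle] at h
    simp only [Circle.coe_exp]
    convert h using 2 <;> push_cast <;> ring
  have := Circle.exp_injOn_Ioc (a := -(c + 4 * π) / 2) (b := -c / 2) (by linarith)
    ⟨by linarith [hs.2], by linarith [hs.1]⟩ ⟨by linarith [hs'.2], by linarith [hs'.1]⟩ key
  linarith

lemma exp_eq_halfAngle_zpow (t : ℤ) (θ : ℝ) :
    exp (-I * t * θ / 2) = halfAngle θ ^ t := by
  rw [halfAngle, ← exp_int_mul]
  ring_nf

theorem exponential_sum_cutoff_general
    (k : ℕ)
    (T : Finset (Fin k → ℤ)) (a : (Fin k → ℤ) → ℂ)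
    (g : (Fin k → ℝ) → ℂ)
    (hg : ∀ θ : Fin k → ℝ,
      g θ = ∑ t ∈ T, a t * ∏ j : Fin k, Complex.exp (-Complex.I * (t j : ℂ) * (θ j : ℂ) / 2))
    (lam : Fin k → ℕ)
    (hbound : ∀ t ∈ T, ∀ j : Fin k, |t j| ≤ (lam j : ℤ))
    (S : Fin k → Finset ℝ)
    (hS : ∀ j : Fin k, ∀ s ∈ S j, 0 ≤ s ∧ s < 4 * Real.pi)
    (hcard : ∀ j : Fin k, 2 * lam j < (S j).card)
    (hzero : ∀ v : Fin k → ℝ, (∀ j : Fin k, v j ∈ S j) → g v = 0) :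
    ∀ θ : Fin k → ℝ, g θ = 0 := by
  have hg' : ∀ θ, g θ = laurentEval T a fun j => halfAngle (θ j) := fun θ => by
    simp only [hg, laurentEval, exp_eq_halfAngle_zpow]
  have hinj : ∀ j, Set.InjOn halfAngle (S j) := fun j =>
    (halfAngle_injOn 0).mono fun s hs => by simpa using hS j s hs
  intro θ
  rw [hg']
  refine laurentEval_eq_zero_of_eq_zero_on_grid hbound a (fun j => (S j).image halfAngle)
    (fun j => by simp [halfAngle_ne_zero])
    (fun j => by rw [card_image_of_injOn (hinj j)]; exact hcard j) (fun z hz => ?_)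
    fun j => halfAngle_ne_zero _
  choose v hvS hv using fun j => mem_image.1 (hz j)
  rw [← funext hv, ← hg', hzero v hvS]

/-- **Cutoff theorem for exponential sums.**
If `g(θ) = ∑_{t ∈ T} a t · ∏_j exp(−i t_j θ_j / 2)` with frequency bounds `|t_j| ≤ λ_j`,
and `g` vanishes on a grid `S₁ × ⋯ × S_k` of angles in `[0, 4π)` with `|S_j| > 2 λ_j`,
then `g` vanishes everywhere. -/
theorem exponential_sum_cutoff
    (k : ℕ) (hk : 1 ≤ k)
    (T : Finset (Fin k → ℤ)) (a : (Fin k → ℤ) → ℂ)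
    (g : (Fin k → ℝ) → ℂ)
    (hg : ∀ θ : Fin k → ℝ,
      g θ = ∑ t ∈ T, a t * ∏ j : Fin k, Complex.exp (-Complex.I * (t j : ℂ) * (θ j : ℂ) / 2))
    (lam : Fin k → ℕ)
    (hbound : ∀ t ∈ T, ∀ j : Fin k, |t j| ≤ (lam j : ℤ))
    (S : Fin k → Finset ℝ)
    (hS : ∀ j : Fin k, ∀ s ∈ S j, 0 ≤ s ∧ s < 4 * Real.pi)
    (hcard : ∀ j : Fin k, 2 * lam j < (S j).card)
    (hzero : ∀ v : Fin k → ℝ, (∀ j : Fin k, v j ∈ S j) → g v = 0) :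
    ∀ θ : Fin k → ℝ, g θ = 0 :=
  exponential_sum_cutoff_general k T a g hg lam hbound S hS hcard hzero
end

section
/- Let k ≥ 1, let T be a finite subset of ℤ^k, let a : ℤ^k → ℂ, and define g : ℝ^k → ℂ by g(θ) = ∑_{t ∈ T} a(t) · ∏_{j=1}^k exp(−i · t_j · θ_j / 2). Suppose λ_1, …, λ_k are natural numbers with |t_j| ≤ λ_j for all t ∈ T and all j, suppose there exists θ ∈ ℝ^k with g(θ) ≠ 0, and let d = (∑_{j=1}^k λ_j) + max_{t ∈ T} ∑_{j=1}^k max(t_j, 0). Then for every finite subset S of [0, 4π), the number of tuples s ∈ S^k with g(s) = 0 is at most d · |S|^{k−1}. Equivalently, if s_1, …, s_k are sampled independently and uniformly from S, then the probability that g(s_1, …, s_k) = 0 is at most d / |S|. -/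
/-!
Substitute `z_j = e^{-iθ_j/2}`. Then `g(θ) = z^{-λ} P(z)` for the polynomial
`P = ∑ t ∈ T, a t · z^{t + λ}`, whose total degree is at most `d`, and `P ≠ 0` because `g` is not
identically zero. On `[0, 4π)` the map `θ ↦ e^{-iθ/2}` is injective, so the zeros of `g` on the
grid `S^k` inject into the zeros of `P` on the grid `z(S)^k`, a grid of the same size, and the
Schwartz–Zippel lemma bounds those by `d · |S|^(k-1)`.
-/

open Complex Real Finset MvPolynomial

namespace MvPolynomial

variable {R : Type*} [CommRing R] [IsDomain R] [DecidableEq R]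

theorem card_filter_eval_eq_zero_le {n : ℕ} {p : MvPolynomial (Fin n) R} (hp : p ≠ 0)
    (S : Finset R) :
    #{x ∈ Fintype.piFinset fun _ ↦ S | eval x p = 0} ≤ p.totalDegree * #S ^ (n - 1) := by
  rcases n with _ | n
  · rw [p.eq_C_of_isEmpty] at hp ⊢
    simp [C_ne_zero.mp hp]
  rcases S.eq_empty_or_nonempty with rfl | hS
  · simp
  have hSZ := schwartz_zippel_totalDegree hp S
  rw [div_le_div_iff₀ (by positivity) (by simpa using hS.card_pos)] at hSZ
  refine Nat.le_of_mul_le_mul_right ?_ hS.card_pos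
  calc _ ≤ p.totalDegree * #S ^ (n + 1) := by exact_mod_cast hSZ
    _ = _ := by rw [Nat.add_sub_cancel, pow_succ, mul_assoc]

end MvPolynomial

section ClearDenominators

variable {σ K : Type*} [Fintype σ] [Field K]

/-- `∏ j, X j ^ lam j` times the Laurent polynomial `∑ t ∈ T, a t * X^t`; the truncation `toNat`
does nothing as long as `-lam j ≤ t j`. -/
noncomputable def clearDenominators (T : Finset (σ → ℤ)) (a : (σ → ℤ) → K) (lam : σ → ℕ) :
    MvPolynomial σ K :=
  ∑ t ∈ T, C (a t) * ∏ j, X j ^ (t j + lam j).toNat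

theorem eval_clearDenominators {T : Finset (σ → ℤ)} (a : (σ → ℤ) → K) {lam : σ → ℕ}
    (hT : ∀ t ∈ T, ∀ j, -(lam j : ℤ) ≤ t j) {x : σ → K} (hx : ∀ j, x j ≠ 0) :
    eval x (clearDenominators T a lam) = (∏ j, x j ^ lam j) * ∑ t ∈ T, a t * ∏ j, x j ^ t j := by
  simp only [clearDenominators, map_sum, map_mul, eval_C, map_prod, map_pow, eval_X, mul_sum]
  refine sum_congr rfl fun t ht ↦ ?_
  have hpow : ∀ j, x j ^ (t j + lam j).toNat = x j ^ lam j * x j ^ t j := fun j ↦ by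
    rw [← zpow_natCast, Int.toNat_of_nonneg (by linarith [hT t ht j]), zpow_add₀ (hx j),
      zpow_natCast, mul_comm]
  simp only [hpow, prod_mul_distrib]
  ring

theorem totalDegree_clearDenominators_le (T : Finset (σ → ℤ)) (a : (σ → ℤ) → K) (lam : σ → ℕ) :
    (clearDenominators T a lam).totalDegree ≤
      ∑ j, lam j + T.sup fun t ↦ ∑ j, (t j).toNat := by
  refine (totalDegree_finsetSum _ _).trans (Finset.sup_le fun t ht ↦ ?_)
  calc (C (a t) * ∏ j, X j ^ (t j + lam j).toNat).totalDegree
      ≤ ∑ j, (X j ^ (t j + lam j).toNat : MvPolynomial σ K).totalDegree := by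
        refine (totalDegree_mul _ _).trans ?_
        rw [totalDegree_C, zero_add]
        exact totalDegree_finsetProd _ _
    _ ≤ ∑ j, (lam j + (t j).toNat) := by
        refine sum_le_sum fun j _ ↦ ?_
        rw [totalDegree_X_pow]
        omega
    _ ≤ _ := by
        rw [sum_add_distrib]
        gcongr
        exact le_sup (f := fun t ↦ ∑ j, (t j).toNat) ht

end ClearDenominators

noncomputable def halfPhase (θ : ℝ) : ℂ := exp (-I * θ / 2)

theorem halfPhase_ne_zero (θ : ℝ) : halfPhase θ ≠ 0 := exp_ne_zero _

theorem halfPhase_zpow (θ : ℝ) (t : ℤ) : halfPhase θ ^ t = exp (-I * t * θ / 2) := by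
  rw [halfPhase, ← exp_int_mul]
  ring_nf

theorem halfPhase_injOn : Set.InjOn halfPhase (Set.Ico 0 (4 * π)) := by
  have hcircle : ∀ θ, halfPhase θ = Circle.exp (-θ / 2) := fun θ ↦ by
    rw [Circle.coe_exp, halfPhase]
    push_cast
    ring_nf
  intro x ⟨hx₀, hx⟩ y ⟨hy₀, hy⟩ h
  rw [hcircle, hcircle] at h
  have := Circle.exp_injOn_Ioc (a := -2 * π) (b := 0) (by linarith)
    ⟨by linarith, by linarith⟩ ⟨by linarith, by linarith⟩ (Circle.ext h)
  linarith

theorem card_filter_piFinset_comp_le {ι α β : Type*} [Fintype ι] [DecidableEq ι] [DecidableEq β]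
    {f : α → β} {S : Finset α} (hf : Set.InjOn f S) (P : (ι → β) → Prop) [DecidablePred P] :
    #{s ∈ Fintype.piFinset fun _ ↦ S | P (f ∘ s)} ≤
      #{x ∈ Fintype.piFinset fun _ ↦ S.image f | P x} := by
  refine card_le_card_of_injOn (f ∘ ·) (fun s hs ↦ ?_) fun s hs s' hs' h ↦ ?_
  · simp only [mem_coe, mem_filter, Fintype.mem_piFinset] at hs ⊢
    exact ⟨fun j ↦ mem_image_of_mem f (hs.1 j), hs.2⟩
  · simp only [mem_coe, mem_filter, Fintype.mem_piFinset] at hs hs'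
    exact funext fun j ↦ hf (hs.1 j) (hs'.1 j) (congrFun h j)

open scoped Classical in
theorem exponential_sum_prob_bound_general
    (k : ℕ)
    (T : Finset (Fin k → ℤ)) (a : (Fin k → ℤ) → ℂ)
    (g : (Fin k → ℝ) → ℂ)
    (hg : ∀ θ : Fin k → ℝ,
      g θ = ∑ t ∈ T, a t * ∏ j : Fin k, Complex.exp (-Complex.I * (t j : ℂ) * (θ j : ℂ) / 2))
    (lam : Fin k → ℕ)
    (hbound : ∀ t ∈ T, ∀ j : Fin k, |t j| ≤ (lam j : ℤ))
    (hne : ∃ θ : Fin k → ℝ, g θ ≠ 0)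
    (d : ℕ)
    (hd : d = (∑ j : Fin k, lam j) + T.sup (fun t => ∑ j : Fin k, (t j).toNat))
    (S : Finset ℝ)
    (hS : ∀ s ∈ S, 0 ≤ s ∧ s < 4 * Real.pi) :
    ((Fintype.piFinset fun _ : Fin k => S).filter fun s => g s = 0).card
      ≤ d * S.card ^ (k - 1) := by
  set P := clearDenominators T a lam
  have hprod : ∀ θ : Fin k → ℝ, ∏ j, halfPhase (θ j) ^ lam j ≠ 0 := fun θ ↦
    prod_ne_zero_iff.mpr fun j _ ↦ pow_ne_zero _ (halfPhase_ne_zero _)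
  have heval : ∀ θ, eval (halfPhase ∘ θ) P = (∏ j, halfPhase (θ j) ^ lam j) * g θ := fun θ ↦ by
    rw [eval_clearDenominators (x := halfPhase ∘ θ) a
      (fun t ht j ↦ (abs_le.mp (hbound t ht j)).1) (fun j ↦ halfPhase_ne_zero _), hg]
    simp only [Function.comp_apply, halfPhase_zpow]
  have hP : P ≠ 0 := fun h ↦ by
    obtain ⟨θ, hθ⟩ := hne
    exact mul_ne_zero (hprod θ) hθ (by rw [← heval, h, map_zero])
  have hinj : Set.InjOn halfPhase S := halfPhase_injOn.mono fun s hs ↦ hS s hs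
  calc #{s ∈ Fintype.piFinset fun _ ↦ S | g s = 0}
      = #{s ∈ Fintype.piFinset fun _ ↦ S | eval (halfPhase ∘ s) P = 0} := by
        simp only [heval, mul_eq_zero, hprod, false_or]
    _ ≤ #{x ∈ Fintype.piFinset fun _ ↦ S.image halfPhase | eval x P = 0} :=
        card_filter_piFinset_comp_le hinj (fun x ↦ eval x P = 0)
    _ ≤ P.totalDegree * #(S.image halfPhase) ^ (k - 1) := card_filter_eval_eq_zero_le hP _
    _ ≤ d * #S ^ (k - 1) := by
        rw [card_image_of_injOn hinj, hd]
        gcongr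
        exact totalDegree_clearDenominators_le T a lam

open scoped Classical in
/-- **Probabilistic bound for exponential sums.**
If `g(θ) = ∑_{t ∈ T} a t · ∏_j exp(−i t_j θ_j / 2)` with frequency bounds `|t_j| ≤ λ_j`
is not identically zero, and
`d = (∑_j λ_j) + max_{t ∈ T} ∑_j max(t_j, 0)`, then for any finite set `S ⊆ [0, 4π)`
the number of grid points `s ∈ S^k` with `g(s) = 0` is at most `d · |S|^(k−1)`;
equivalently, the probability that `g` vanishes at a uniformly random grid point
is at most `d / |S|`. -/
theorem exponential_sum_prob_bound
    (k : ℕ) (hk : 1 ≤ k)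
    (T : Finset (Fin k → ℤ)) (a : (Fin k → ℤ) → ℂ)
    (g : (Fin k → ℝ) → ℂ)
    (hg : ∀ θ : Fin k → ℝ,
      g θ = ∑ t ∈ T, a t * ∏ j : Fin k, Complex.exp (-Complex.I * (t j : ℂ) * (θ j : ℂ) / 2))
    (lam : Fin k → ℕ)
    (hbound : ∀ t ∈ T, ∀ j : Fin k, |t j| ≤ (lam j : ℤ))
    (hne : ∃ θ : Fin k → ℝ, g θ ≠ 0)
    (d : ℕ)
    (hd : d = (∑ j : Fin k, lam j) + T.sup (fun t => ∑ j : Fin k, (t j).toNat))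
    (S : Finset ℝ)
    (hS : ∀ s ∈ S, 0 ≤ s ∧ s < 4 * Real.pi) :
    ((Fintype.piFinset fun _ : Fin k => S).filter fun s => g s = 0).card
      ≤ d * S.card ^ (k - 1) :=
  exponential_sum_prob_bound_general k T a g hg lam hbound hne d hd S hS
end

section
/- Let k ≥ 1 and let F, G : ℝ^k → ℂ be functions that are each 4π-periodic in every coordinate (i.e., F(θ + 4π·e_j) = F(θ) and G(θ + 4π·e_j) = G(θ) for all θ ∈ ℝ^k and all j, where e_j is the j-th standard basis vector). Suppose there exist α ∈ ℝ^k and β ∈ ℝ such that G(θ) = exp(−i·(α_1·θ_1 + ⋯ + α_k·θ_k + β)/2) · F(θ) for all θ ∈ ℝ^k, and suppose F is not identically zero. Then α_j is an integer for every j ∈ {1,…,k}. -/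
open Complex Real

/-- **Integrality of global phase coefficients.**
If `F` and `G` are `4π`-periodic in each coordinate, `F` is not identically zero, and
`G(θ) = exp(−i(α₁θ₁ + ⋯ + α_kθ_k + β)/2) · F(θ)` for all `θ`, then every coefficient
`α_j` is an integer. -/
theorem phase_coefficients_integral
    (k : ℕ) (hk : 1 ≤ k)
    (F G : (Fin k → ℝ) → ℂ)
    (hFper : ∀ (θ : Fin k → ℝ) (j : Fin k),
      F (θ + (4 * Real.pi) • (Pi.single j 1 : Fin k → ℝ)) = F θ)
    (hGper : ∀ (θ : Fin k → ℝ) (j : Fin k),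
      G (θ + (4 * Real.pi) • (Pi.single j 1 : Fin k → ℝ)) = G θ)
    (α : Fin k → ℝ) (β : ℝ)
    (hphase : ∀ θ : Fin k → ℝ,
      G θ = Complex.exp (-Complex.I * (((∑ j : Fin k, α j * θ j) + β : ℝ) : ℂ) / 2) * F θ)
    (hne : ∃ θ : Fin k → ℝ, F θ ≠ 0) :
    ∀ j : Fin k, ∃ m : ℤ, α j = m := by
  intro j
  obtain ⟨θ, hF⟩ := hne
  set θ' : Fin k → ℝ := θ + (4 * Real.pi) • (Pi.single j 1 : Fin k → ℝ) with hθ'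
  have hsum : (∑ i : Fin k, α i * θ' i) = (∑ i : Fin k, α i * θ i) + 4 * Real.pi * α j := by
    have : ∀ i : Fin k, α i * θ' i = α i * θ i + α i * ((4 * Real.pi) * (Pi.single j 1 : Fin k → ℝ) i) := by
      intro i
      simp [hθ', Pi.single_apply, mul_add]
    rw [Finset.sum_congr rfl fun i _ => this i, Finset.sum_add_distrib]
    congr 1
    rw [Finset.sum_eq_single j]
    · simp [Pi.single_apply]; ring
    · intro i _ hij; simp [Pi.single_apply, hij]
    · simp
  have h1 := hphase θ'
  have h2 := hphase θ
  rw [hGper θ j, hFper θ j] at h1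
  rw [h2] at h1
  have hexp : Complex.exp (-Complex.I * (((∑ i : Fin k, α i * θ' i) + β : ℝ) : ℂ) / 2)
      = Complex.exp (-Complex.I * (((∑ i : Fin k, α i * θ i) + β : ℝ) : ℂ) / 2) :=
    mul_right_cancel₀ hF h1.symm
  have hone : Complex.exp (-Complex.I * (2 * Real.pi * α j)) = 1 := by
    have := Complex.exp_sub (-Complex.I * (((∑ i : Fin k, α i * θ' i) + β : ℝ) : ℂ) / 2)
      (-Complex.I * (((∑ i : Fin k, α i * θ i) + β : ℝ) : ℂ) / 2)
    rw [hexp, div_self (Complex.exp_ne_zero _)] at this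
    rw [← this]
    congr 1
    rw [hsum]
    push_cast
    ring
  rw [Complex.exp_eq_one_iff] at hone
  obtain ⟨n, hn⟩ := hone
  refine ⟨-n, ?_⟩
  have hI : Complex.I ≠ 0 := Complex.I_ne_zero
  have hpi : (Real.pi : ℂ) ≠ 0 := by exact_mod_cast Real.pi_ne_zero
  have : ((α j : ℂ)) = ((-n : ℤ) : ℂ) := by
    have : -(Complex.I * (2 * Real.pi * α j)) = n * (2 * Real.pi * Complex.I) := by
      rw [← hn]; ring
    have h2 : Complex.I * (2 * Real.pi) * (α j : ℂ) = Complex.I * (2 * Real.pi) * ((-n : ℤ) : ℂ) := by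
      push_cast
      linear_combination -this
    have hne2 : Complex.I * (2 * Real.pi) ≠ 0 := by
      apply mul_ne_zero hI
      simp [hpi]
    exact mul_left_cancel₀ hne2 h2
  exact_mod_cast this
end

section
/- Let k ≥ 1, let T₁, T₂ be finite subsets of ℤ^k, let a, b : ℤ^k → ℂ, and define F(θ) = ∑_{t ∈ T₁} a(t) · ∏_{j=1}^k exp(−i · t_j · θ_j / 2) and G(θ) = ∑_{t ∈ T₂} b(t) · ∏_{j=1}^k exp(−i · t_j · θ_j / 2) for θ ∈ ℝ^k. Suppose λ_1, …, λ_k are natural numbers with |t_j| ≤ λ_j for every t ∈ T₁ ∪ T₂ and every j, suppose F is not identically zero, and suppose there exist α ∈ ℝ^k and β ∈ ℝ such that G(θ) = exp(−i·(α_1·θ_1 + ⋯ + α_k·θ_k + β)/2) · F(θ) for all θ ∈ ℝ^k. Then for every j ∈ {1,…,k}, α_j is an integer and |α_j| ≤ 2·λ_j. -/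
/-!
On the line `x ↦ θ₀ + x • eⱼ` through a point `θ₀` where `F` does not vanish, both sums become
Laurent polynomials in `z = e^{-ix/2}` with exponents in `[-λⱼ, λⱼ]`, and the phase becomes
`c · e^{-iαⱼx/2}`. Both sums are `4π`-periodic in `x` while `F(θ₀) ≠ 0`, so `e^{-2πiαⱼ} = 1`,
i.e. `αⱼ ∈ ℤ`. Multiplying by `z^λⱼ` turns both sums into polynomials `P`, `Q` of degree at
most `2λⱼ` with `Q(z) = c z^αⱼ P(z)` on the infinite unit circle, and comparing degrees gives
`|αⱼ| ≤ 2λⱼ`.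
-/

open Complex Real Polynomial Function

noncomputable def expNegHalf (x : ℝ) : ℂ := cexp (-I * x / 2)

lemma expNegHalf_ne_zero (x : ℝ) : expNegHalf x ≠ 0 := Complex.exp_ne_zero _

lemma expNegHalf_add (x y : ℝ) : expNegHalf (x + y) = expNegHalf x * expNegHalf y := by
  rw [expNegHalf, expNegHalf, expNegHalf, ← Complex.exp_add]
  push_cast
  ring_nf

lemma expNegHalf_intCast_mul (n : ℤ) (x : ℝ) : expNegHalf (n * x) = expNegHalf x ^ n := by
  rw [expNegHalf, expNegHalf, ← Complex.exp_int_mul]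
  push_cast
  ring_nf

lemma expNegHalf_eq_one_iff {x : ℝ} : expNegHalf x = 1 ↔ ∃ n : ℤ, x = n * (4 * π) := by
  rw [expNegHalf, Complex.exp_eq_one_iff]
  refine ⟨fun ⟨n, h⟩ => ⟨-n, ?_⟩, fun ⟨n, h⟩ => ⟨-n, ?_⟩⟩
  · have : (x : ℂ) = ((-n * (4 * π) : ℝ) : ℂ) := by
      push_cast
      linear_combination (2 * I) * h + (x + 4 * π * n) * I_sq
    exact_mod_cast this
  · rw [h]
    push_cast
    ring

lemma periodic_expNegHalf : Periodic expNegHalf (4 * π) := fun x => by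
  rw [expNegHalf_add, (expNegHalf_eq_one_iff (x := 4 * π)).2 ⟨1, by simp⟩, mul_one]

lemma infinite_range_expNegHalf : (Set.range expNegHalf).Infinite := by
  have : Infinite Circle :=
    Circle.argEquiv.infinite_iff.2 (Set.Ioc_infinite (by linarith [pi_pos])).to_subtype
  refine (Set.infinite_range_of_injective (α := Circle) Circle.coe_injective).mono ?_
  rintro _ ⟨w, rfl⟩
  obtain ⟨y, rfl⟩ := Circle.exp_surjective w
  exact ⟨-2 * y, by rw [expNegHalf, Circle.coe_exp]; push_cast; ring_nf⟩

section ExpSum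

variable {ι : Type*} [Fintype ι]

noncomputable def expSum (T : Finset (ι → ℤ)) (a : (ι → ℤ) → ℂ) (θ : ι → ℝ) : ℂ :=
  ∑ t ∈ T, a t * ∏ j, cexp (-I * (t j : ℂ) * (θ j : ℂ) / 2)

variable [DecidableEq ι]

lemma prod_exp_add_single (t : ι → ℤ) (θ : ι → ℝ) (j : ι) (x : ℝ) :
    ∏ l, cexp (-I * (t l : ℂ) * ((θ + Pi.single j x : ι → ℝ) l : ℂ) / 2)
      = (∏ l, cexp (-I * (t l : ℂ) * (θ l : ℂ) / 2)) * expNegHalf x ^ t j := by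
  have hsingle :
      ∏ l, cexp (-I * (t l : ℂ) * ((Pi.single j x : ι → ℝ) l : ℂ) / 2) = expNegHalf x ^ t j := by
    rw [Fintype.prod_eq_single j fun l hl => by simp [Pi.single_eq_of_ne hl],
      ← expNegHalf_intCast_mul, expNegHalf, Pi.single_eq_same]
    push_cast
    ring_nf
  simp only [Pi.add_apply, ofReal_add, mul_add, add_div, Complex.exp_add,
    Finset.prod_mul_distrib, hsingle]

lemma expSum_add_single (T : Finset (ι → ℤ)) (a : (ι → ℤ) → ℂ) (θ : ι → ℝ) (j : ι) (x : ℝ) :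
    expSum T a (θ + Pi.single j x)
      = ∑ t ∈ T, (a t * ∏ l, cexp (-I * (t l : ℂ) * (θ l : ℂ) / 2)) * expNegHalf x ^ t j := by
  simp only [expSum, prod_exp_add_single, ← mul_assoc]

lemma periodic_expSum_add_single (T : Finset (ι → ℤ)) (a : (ι → ℤ) → ℂ) (θ : ι → ℝ) (j : ι) :
    Periodic (fun x => expSum T a (θ + Pi.single j x)) (4 * π) := fun x => by
  simp only [expSum_add_single, periodic_expNegHalf x]

end ExpSum

lemma exists_polynomial_eval_eq_pow_mul_sum_zpow {K ι : Type*} [Field K] (s : Finset ι)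
    (c : ι → K) (e : ι → ℤ) (N : ℕ) (he : ∀ i ∈ s, |e i| ≤ N) :
    ∃ P : K[X], P.natDegree ≤ 2 * N ∧
      ∀ z ≠ 0, P.eval z = z ^ N * ∑ i ∈ s, c i * z ^ e i := by
  refine ⟨∑ i ∈ s, C (c i) * X ^ (e i + N).toNat, ?_, fun z hz => ?_⟩
  · refine natDegree_sum_le_of_forall_le _ _ fun i hi => natDegree_C_mul_le _ _ |>.trans ?_
    have := abs_le.1 (he i hi)
    rw [natDegree_X_pow]
    omega
  · rw [eval_finsetSum, Finset.mul_sum]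
    refine Finset.sum_congr rfl fun i hi => ?_
    have hnonneg : 0 ≤ e i + N := by linarith [(abs_le.1 (he i hi)).1]
    rw [eval_mul, eval_C, eval_pow, eval_X, ← zpow_natCast, Int.toNat_of_nonneg hnonneg,
      zpow_add₀ hz, zpow_natCast]
    ring

lemma exists_polynomial_expSum_add_single {ι : Type*} [Fintype ι] [DecidableEq ι]
    (T : Finset (ι → ℤ)) (a : (ι → ℤ) → ℂ) (θ : ι → ℝ) (j : ι) {N : ℕ}
    (hT : ∀ t ∈ T, |t j| ≤ N) :
    ∃ P : ℂ[X], P.natDegree ≤ 2 * N ∧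
      ∀ x : ℝ, P.eval (expNegHalf x) = expNegHalf x ^ N * expSum T a (θ + Pi.single j x) := by
  obtain ⟨P, hPd, hP⟩ := exists_polynomial_eval_eq_pow_mul_sum_zpow (K := ℂ) T _ (fun t => t j) N hT
  exact ⟨P, hPd, fun x => by rw [expSum_add_single, hP _ (expNegHalf_ne_zero x)]⟩

lemma le_natDegree_of_eval_eq_mul_pow {R : Type*} [CommRing R] [IsDomain R] {S : Set R}
    (hS : S.Infinite) {P Q : R[X]} (hP : P ≠ 0) {c : R} (hc : c ≠ 0) {n : ℕ}
    (h : ∀ z ∈ S, Q.eval z = c * z ^ n * P.eval z) : n ≤ Q.natDegree := by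
  have hQ : Q = C c * (X ^ n * P) :=
    eq_of_infinite_eval_eq _ _ <| hS.mono fun z hz => by simp [h z hz, mul_assoc]
  rw [hQ, natDegree_C_mul hc, natDegree_X_pow_mul _ hP]
  omega

lemma natAbs_le_of_eval_eq_mul_zpow {K : Type*} [Field K] {S : Set K} (hS : S.Infinite)
    (hS₀ : (0 : K) ∉ S) {P Q : K[X]} (hP : P ≠ 0) (hQ : Q ≠ 0) {c : K} (hc : c ≠ 0) {d : ℕ}
    (hPd : P.natDegree ≤ d) (hQd : Q.natDegree ≤ d) {m : ℤ}
    (h : ∀ z ∈ S, Q.eval z = c * z ^ m * P.eval z) : m.natAbs ≤ d := by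
  obtain ⟨n, rfl | rfl⟩ := Int.eq_nat_or_neg m
  · rw [Int.natAbs_natCast]
    exact (le_natDegree_of_eval_eq_mul_pow hS hP hc fun z hz => by
      simpa using h z hz).trans hQd
  · rw [Int.natAbs_neg, Int.natAbs_natCast]
    refine (le_natDegree_of_eval_eq_mul_pow hS hQ (inv_ne_zero hc) fun z hz => ?_).trans hPd
    have hz₀ : z ≠ 0 := ne_of_mem_of_not_mem hz hS₀
    rw [h z hz, zpow_neg, zpow_natCast]
    field_simp

lemma exists_int_eq_of_eq_mul_expNegHalf {f g : ℝ → ℂ} (hf : Periodic f (4 * π))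
    (hg : Periodic g (4 * π)) {x₀ : ℝ} (hx₀ : f x₀ ≠ 0) {c : ℂ} (hc : c ≠ 0) {α : ℝ}
    (h : ∀ x, g x = c * expNegHalf (α * x) * f x) : ∃ m : ℤ, α = m := by
  have hperiod : expNegHalf (α * (4 * π)) = 1 := by
    have hA : c * expNegHalf (α * x₀) * f x₀ ≠ 0 := by simp [hc, hx₀, expNegHalf_ne_zero]
    have := h (x₀ + 4 * π)
    rw [hg, hf, h, mul_add, expNegHalf_add] at this
    exact mul_left_cancel₀ hA (by linear_combination -this)
  obtain ⟨m, hm⟩ := expNegHalf_eq_one_iff.1 hperiod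
  exact ⟨m, mul_right_cancel₀ (by positivity) hm⟩

lemma natAbs_le_of_eq_mul_expNegHalf_zpow {f g : ℝ → ℂ} {P Q : ℂ[X]} {N d : ℕ}
    (hP : ∀ x, P.eval (expNegHalf x) = expNegHalf x ^ N * f x)
    (hQ : ∀ x, Q.eval (expNegHalf x) = expNegHalf x ^ N * g x)
    (hPd : P.natDegree ≤ d) (hQd : Q.natDegree ≤ d) {x₀ : ℝ} (hx₀ : f x₀ ≠ 0) {c : ℂ}
    (hc : c ≠ 0) {m : ℤ} (h : ∀ x, g x = c * expNegHalf x ^ m * f x) : m.natAbs ≤ d := by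
  have hP₀ : P ≠ 0 := by
    rintro rfl
    simpa [expNegHalf_ne_zero, hx₀] using hP x₀
  have hQ₀ : Q ≠ 0 := by
    rintro rfl
    simpa [expNegHalf_ne_zero, zpow_ne_zero, hx₀, hc, h] using hQ x₀
  refine natAbs_le_of_eval_eq_mul_zpow infinite_range_expNegHalf
    (fun ⟨x, hx⟩ => expNegHalf_ne_zero x hx) hP₀ hQ₀ hc hPd hQd ?_
  rintro _ ⟨x, rfl⟩
  rw [hQ, hP, h]
  ring

theorem phase_coefficients_integral_and_bounded_general
    (k : ℕ)
    (T₁ T₂ : Finset (Fin k → ℤ)) (a b : (Fin k → ℤ) → ℂ)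
    (F G : (Fin k → ℝ) → ℂ)
    (hF : ∀ θ : Fin k → ℝ,
      F θ = ∑ t ∈ T₁, a t * ∏ j : Fin k, Complex.exp (-Complex.I * (t j : ℂ) * (θ j : ℂ) / 2))
    (hG : ∀ θ : Fin k → ℝ,
      G θ = ∑ t ∈ T₂, b t * ∏ j : Fin k, Complex.exp (-Complex.I * (t j : ℂ) * (θ j : ℂ) / 2))
    (lam : Fin k → ℕ)
    (hbound : ∀ t ∈ T₁ ∪ T₂, ∀ j : Fin k, |t j| ≤ (lam j : ℤ))
    (hne : ∃ θ : Fin k → ℝ, F θ ≠ 0)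
    (α : Fin k → ℝ) (β : ℝ)
    (hphase : ∀ θ : Fin k → ℝ,
      G θ = Complex.exp (-Complex.I * (((∑ j : Fin k, α j * θ j) + β : ℝ) : ℂ) / 2) * F θ) :
    ∀ j : Fin k, (∃ m : ℤ, α j = m) ∧ |α j| ≤ 2 * (lam j : ℝ) := by
  intro j
  obtain ⟨θ₀, hθ₀⟩ := hne
  obtain rfl : F = expSum T₁ a := funext hF
  obtain rfl : G = expSum T₂ b := funext hG
  have hline : ∀ x : ℝ, expSum T₂ b (θ₀ + Pi.single j x)
      = expNegHalf (∑ l, α l * θ₀ l + β) * expNegHalf (α j * x)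
        * expSum T₁ a (θ₀ + Pi.single j x) := by
    intro x
    have hsum : ∑ l, α l * (θ₀ + Pi.single j x : Fin k → ℝ) l + β
        = (∑ l, α l * θ₀ l + β) + α j * x := by
      change α ⬝ᵥ (θ₀ + Pi.single j x) + β = α ⬝ᵥ θ₀ + β + α j * x
      rw [dotProduct_add, dotProduct_single]
      ring
    rw [hphase]
    change expNegHalf _ * _ = _
    rw [hsum, expNegHalf_add]
  have hθ₀' : expSum T₁ a (θ₀ + Pi.single j 0) ≠ 0 := by simpa using hθ₀
  obtain ⟨m, hm⟩ := exists_int_eq_of_eq_mul_expNegHalf (periodic_expSum_add_single T₁ a θ₀ j)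
    (periodic_expSum_add_single T₂ b θ₀ j) hθ₀' (expNegHalf_ne_zero _) hline
  obtain ⟨P, hPd, hP⟩ := exists_polynomial_expSum_add_single T₁ a θ₀ j
    fun t ht => hbound t (Finset.mem_union_left _ ht) j
  obtain ⟨Q, hQd, hQ⟩ := exists_polynomial_expSum_add_single T₂ b θ₀ j
    fun t ht => hbound t (Finset.mem_union_right _ ht) j
  have hm_le := natAbs_le_of_eq_mul_expNegHalf_zpow hP hQ hPd hQd hθ₀' (expNegHalf_ne_zero _)
    fun x => by rw [hline, hm, expNegHalf_intCast_mul]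
  refine ⟨⟨m, hm⟩, ?_⟩
  rw [hm, ← Int.cast_abs, Int.abs_eq_natAbs]
  exact_mod_cast hm_le

/-- **Bound on global phase coefficients.**
If `F` and `G` are exponential sums with frequencies bounded by `λ_j` in each variable,
`F` is not identically zero, and `G(θ) = exp(−i(α₁θ₁ + ⋯ + α_kθ_k + β)/2) · F(θ)`,
then each `α_j` is an integer with `|α_j| ≤ 2 λ_j`. -/
theorem phase_coefficients_integral_and_bounded
    (k : ℕ) (hk : 1 ≤ k)
    (T₁ T₂ : Finset (Fin k → ℤ)) (a b : (Fin k → ℤ) → ℂ)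
    (F G : (Fin k → ℝ) → ℂ)
    (hF : ∀ θ : Fin k → ℝ,
      F θ = ∑ t ∈ T₁, a t * ∏ j : Fin k, Complex.exp (-Complex.I * (t j : ℂ) * (θ j : ℂ) / 2))
    (hG : ∀ θ : Fin k → ℝ,
      G θ = ∑ t ∈ T₂, b t * ∏ j : Fin k, Complex.exp (-Complex.I * (t j : ℂ) * (θ j : ℂ) / 2))
    (lam : Fin k → ℕ)
    (hbound : ∀ t ∈ T₁ ∪ T₂, ∀ j : Fin k, |t j| ≤ (lam j : ℤ))
    (hne : ∃ θ : Fin k → ℝ, F θ ≠ 0)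
    (α : Fin k → ℝ) (β : ℝ)
    (hphase : ∀ θ : Fin k → ℝ,
      G θ = Complex.exp (-Complex.I * (((∑ j : Fin k, α j * θ j) + β : ℝ) : ℂ) / 2) * F θ) :
    ∀ j : Fin k, (∃ m : ℤ, α j = m) ∧ |α j| ≤ 2 * (lam j : ℝ) :=
  phase_coefficients_integral_and_bounded_general k T₁ T₂ a b F G hF hG lam hbound hne α β hphase
end
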